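/- arXiv:2104.14745 — 2 statements merged into one kernel-verified Lean document; each statement's English description precedes it below -/
import Mathlib

section
/- For every integer m ≥ 2, every M with 1 ≤ M ≤ 3·2^m, and every N ≥ 9·2^{m−1} + 3, there exist a positive integer r and an irredundant mixed orthogonal array IrMOA(r, M+N, 3^M2^N, 2). -/
open Finset

/-- The Hamming distance between two rows of an array: the number of columns
in which the rows differ. -/
def hamDist {ι κ : Type*} [Fintype κ] (A : ι → κ → ℕ) (i i' : ι) : ℕ :=
  (Finset.univ.filter fun j => A i j ≠ A i' j).card

/-- `MD(A)`: the minimum Hamming distance over all pairs of distinct rows. -/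
noncomputable def minDist {ι κ : Type*} [Fintype κ] (A : ι → κ → ℕ) : ℕ :=
  sInf {n | ∃ i i', i ≠ i' ∧ hamDist A i i' = n}

/-- `A` is a mixed orthogonal array of strength `k` (rows indexed by `ι`,
columns by `κ`, column `j` taking values in `{0, …, lv j − 1}`): in the
subarray given by any choice of at most `k` columns, every tuple of symbols
occurs equally often as a row, namely (number of rows)/(product of the levels
of the chosen columns) times. -/
def IsMOA {ι κ : Type*} [Fintype ι] [Fintype κ] [DecidableEq κ]
    (A : ι → κ → ℕ) (lv : κ → ℕ) (k : ℕ) : Prop :=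
  (∀ i j, A i j < lv j) ∧
  ∀ S : Finset κ, S.card ≤ k → ∀ x : κ → ℕ, (∀ j ∈ S, x j < lv j) →
    (Finset.univ.filter fun i : ι => ∀ j ∈ S, A i j = x j).card * ∏ j ∈ S, lv j
      = Fintype.card ι

/-- An irredundant mixed orthogonal array of strength `k`: an MOA of strength
`k` any two distinct rows of which have Hamming distance at least `k+1`. -/
def IsIrMOA {ι κ : Type*} [Fintype ι] [Fintype κ] [DecidableEq κ]
    (A : ι → κ → ℕ) (lv : κ → ℕ) (k : ℕ) : Prop :=
  IsMOA A lv k ∧ ∀ i i' : ι, i ≠ i' → k + 1 ≤ hamDist A i i'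

/-- A difference scheme `D(r, c, d)`: an `r × c` matrix over `ℤ_d` such that
for any two distinct columns the `r` differences of corresponding entries
take each value of `ℤ_d` exactly `r/d` times. -/
def IsDiffScheme {r c d : ℕ} (B : Fin r → Fin c → ZMod d) : Prop :=
  ∀ j j' : Fin c, j ≠ j' → ∀ g : ZMod d,
    (Finset.univ.filter fun i : Fin r => B i j - B i j' = g).card * d = r

/-!
Rows are indexed by pairs `(x, w) ∈ 𝔽₃^(s+2) × 𝔽₂^(n+2)`. A ternary column is a linear form
`x ↦ (1, p) ⬝ᵥ x` for an affine point `p`; a binary column is `w ↦ g ⬝ᵥ w + o x` for a nonzero `g`,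
shifted by an offset depending on `x` only. Any two column vectors of the same kind are linearly
independent, so every pair of columns is equidistributed whatever the offsets are: strength 2.

For distance 3, if `w ≠ w'` the binary columns without offset already differ in three places:
they are at least `2^n + 3` affine points `(1, p)`, `p ∈ 𝔽₂^(n+1)`, and a nonzero linear form
vanishes on at most `2^n` of them. If `w = w'`, the binary parts differ exactly where the offsets
do. For the same reason `M + d ≥ 3^s + 3` ternary forms `(1, p)`, `p ∈ 𝔽₃^(s+1)`, make a code of
distance at least 3, but only `M` of them are ternary columns; the other `d ≤ 5` coordinates are
copied into the offsets by a one-hot encoding on `2d` binary columns, where they still count.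
-/

open Matrix

theorem card_filter_sum {α β : Type*} [Fintype α] [Fintype β] (P : α ⊕ β → Prop)
    [DecidablePred P] : #{c | P c} = #{a | P (.inl a)} + #{b | P (.inr b)} := by
  simp only [card_filter, Fintype.sum_sum_type]

theorem card_filter_prod_mul {X W : Type*} [Fintype X] [Fintype W] {P : X → Prop}
    {Q : X → W → Prop} [DecidablePred P] [∀ x, DecidablePred (Q x)] {p q : ℕ}
    (hP : #{x | P x} * p = Fintype.card X) (hQ : ∀ x, #{w | Q x w} * q = Fintype.card W) :
    #{xw : X × W | P xw.1 ∧ Q xw.1 xw.2} * (p * q) = Fintype.card (X × W) := by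
  have h : #{xw : X × W | P xw.1 ∧ Q xw.1 xw.2} * q = #{x | P x} * Fintype.card W := by
    simp only [card_filter, Fintype.sum_prod_type, ite_and, sum_mul]
    refine sum_congr rfl fun x _ => ?_
    split_ifs with hx
    · rw [← hQ x, card_filter, sum_mul]
      simp
    · simp
  rw [Fintype.card_prod, ← hP]
  calc _ = #{xw : X × W | P xw.1 ∧ Q xw.1 xw.2} * q * p := by ring
    _ = _ := by rw [h]; ring

theorem AddMonoidHom.card_fiber_mul_card_of_surjective {G H : Type*} [AddGroup G] [Fintype G]
    [AddGroup H] [Fintype H] [DecidableEq H] (f : G →+ H) (hf : Function.Surjective f) (y : H) :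
    #{g | f g = y} * Fintype.card H = Fintype.card G := by
  have hG : Fintype.card G = ∑ z : H, #{g | f g = z} :=
    card_eq_sum_card_fiberwise (f := f) (s := univ) (t := univ) (by simp)
  rw [hG, sum_congr rfl fun z _ => card_fiber_eq_of_mem_range f (hf z) (hf y), sum_const,
    card_univ, smul_eq_mul, mul_comm]

theorem Matrix.mulVec_surjective_of_linearIndependent_row {K m n : Type*} [Field K] [Fintype m]
    [Fintype n] {A : Matrix m n K} (h : LinearIndependent K A.row) :
    Function.Surjective A.mulVec := by
  have hA : LinearMap.range A.mulVecLin = ⊤ := Submodule.eq_top_of_finrank_eq <| by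
    rw [← Matrix.rank, h.rank_matrix, Module.finrank_fintype_fun_eq_card]
  exact LinearMap.range_eq_top.mp hA

theorem card_filter_forall_dotProduct_eq_mul {K ι κ : Type*} [Field K] [Fintype K]
    [DecidableEq K] [Fintype ι] [DecidableEq ι] [DecidableEq κ] {v : κ → ι → K} {T : Finset κ}
    (hT : LinearIndepOn K v T) (z : κ → K) :
    #{x : ι → K | ∀ j ∈ T, v j ⬝ᵥ x = z j} * Fintype.card K ^ #T
      = Fintype.card K ^ Fintype.card ι := by
  let A : Matrix T ι K := fun j => v j
  have hA := AddMonoidHom.card_fiber_mul_card_of_surjective A.mulVecLin.toAddMonoidHom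
    (Matrix.mulVec_surjective_of_linearIndependent_row (A := A) hT) (fun j => z j)
  rw [Fintype.card_fun, Fintype.card_coe, Fintype.card_fun] at hA
  have hfib : ∀ x, (A.mulVecLin.toAddMonoidHom x = fun j : T => z j) ↔
      ∀ j ∈ T, v j ⬝ᵥ x = z j :=
    fun x => show A *ᵥ x = _ ↔ _ by simp [funext_iff, A, Matrix.mulVec]
  simpa only [hfib] using hA

theorem card_filter_dotProduct_eq_mul {K ι : Type*} [Field K] [Fintype K] [DecidableEq K]
    [Fintype ι] [DecidableEq ι] {v : ι → K} (hv : v ≠ 0) (z : K) :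
    #{x : ι → K | v ⬝ᵥ x = z} * Fintype.card K = Fintype.card K ^ Fintype.card ι := by
  simpa using card_filter_forall_dotProduct_eq_mul (v := fun _ : Unit => v) (T := {()})
    (by rw [coe_singleton]; exact (linearIndepOn_singleton_iff K).mpr hv) (fun _ => z)

theorem linearIndepOn_of_card_le_two {K V κ : Type*} [Field K] [AddCommGroup V] [Module K V]
    {v : κ → V} (hv0 : ∀ c, v c ≠ 0) (hv : ∀ c c', c ≠ c' → ∀ a : K, a • v c ≠ v c')
    {T : Finset κ} (hT : #T ≤ 2) : LinearIndepOn K v T := by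
  classical
  obtain h | h | h : #T = 0 ∨ #T = 1 ∨ #T = 2 := by omega
  · rw [card_eq_zero.mp h, coe_empty]
    exact linearIndepOn_empty K v
  · obtain ⟨c, rfl⟩ := card_eq_one.mp h
    rw [coe_singleton]
    exact (linearIndepOn_singleton_iff K).mpr (hv0 c)
  · obtain ⟨c, c', hcc', rfl⟩ := card_eq_two.mp h
    rw [coe_pair]
    exact (linearIndepOn_pair_iff v hcc' (hv0 c)).mpr (hv c c' hcc')

theorem smul_cons_one_ne_cons_one {K : Type*} [Field K] {n : ℕ} {p p' : Fin n → K}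
    (h : p ≠ p') (a : K) : a • (Fin.cons 1 p : Fin (n + 1) → K) ≠ Fin.cons 1 p' := by
  intro hap
  obtain rfl : a = 1 := by simpa using congr_fun hap 0
  exact h (by simpa using hap)

theorem ZMod.smul_ne_of_ne_of_ne_zero {V : Type*} [AddCommGroup V] [Module (ZMod 2) V]
    {x y : V} (hxy : x ≠ y) (hy : y ≠ 0) (a : ZMod 2) : a • x ≠ y := by
  obtain rfl | rfl : a = 0 ∨ a = 1 := by revert a; decide
  · simpa using hy.symm
  · simpa using hxy

theorem linearIndepOn_cons_one {K κ : Type*} [Field K] {n : ℕ} {p : κ → Fin n → K}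
    (hp : Function.Injective p) {T : Finset κ} (hT : #T ≤ 2) :
    LinearIndepOn K (fun c => (Fin.cons 1 (p c) : Fin (n + 1) → K)) T :=
  linearIndepOn_of_card_le_two (fun c h => by simpa using congr_fun h 0)
    (fun _ _ hcc' => smul_cons_one_ne_cons_one (hp.ne hcc')) hT

theorem linearIndepOn_sumElim_cons_one_cons_zero {α β : Type*} {n : ℕ}
    {p : α → Fin n → ZMod 2} {q : β → Fin n → ZMod 2} (hp : Function.Injective p)
    (hq : Function.Injective q) (hq0 : ∀ r, q r ≠ 0) {T : Finset (α ⊕ β)} (hT : #T ≤ 2) :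
    LinearIndepOn (ZMod 2)
      (Sum.elim (fun i => (Fin.cons 1 (p i) : Fin (n + 1) → ZMod 2)) fun r => Fin.cons 0 (q r))
      T := by
  have h0 : ∀ c, Sum.elim (fun i => (Fin.cons 1 (p i) : Fin (n + 1) → ZMod 2))
      (fun r => Fin.cons 0 (q r)) c ≠ 0 := by
    rintro (i | r) h
    · simpa using congr_fun h 0
    · exact hq0 r (funext fun i => by simpa using congr_fun h i.succ)
  refine linearIndepOn_of_card_le_two h0
    (fun c c' hcc' => ZMod.smul_ne_of_ne_of_ne_zero ?_ (h0 c')) hT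
  rcases c with i | r <;> rcases c' with i' | r' <;>
    simp [Fin.cons_inj, hp.eq_iff, hq.eq_iff] at hcc' ⊢ <;> exact hcc'

theorem card_le_card_filter_cons_one_dotProduct_ne_zero_add {K κ : Type*} [Field K] [Fintype K]
    [DecidableEq K] [Fintype κ] {n : ℕ} {p : κ → Fin (n + 1) → K} (hp : Function.Injective p)
    {δ : Fin (n + 2) → K} (hδ : δ ≠ 0) :
    Fintype.card κ ≤
      #{c | (Fin.cons 1 (p c) : Fin (n + 2) → K) ⬝ᵥ δ ≠ 0} + Fintype.card K ^ n := by
  have hdot : ∀ c, (Fin.cons 1 (p c) : Fin (n + 2) → K) ⬝ᵥ δ = δ 0 + Fin.tail δ ⬝ᵥ p c := by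
    intro c
    rw [show (Fin.cons 1 (p c) : Fin (n + 2) → K) = vecCons 1 (p c) from rfl, cons_dotProduct,
      one_mul, dotProduct_comm]
    rfl
  suffices #{c | δ 0 + Fin.tail δ ⬝ᵥ p c = 0} ≤ Fintype.card K ^ n by
    rw [← card_univ, ← card_filter_add_card_filter_not
      (fun c => (Fin.cons 1 (p c) : Fin (n + 2) → K) ⬝ᵥ δ ≠ 0)]
    simp only [hdot, not_not]
    omega
  by_cases hv : Fin.tail δ = 0
  · have h0 : δ 0 ≠ 0 := fun h0 => hδ <| funext fun i => Fin.cases h0 (congr_fun hv) i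
    simp [hv, h0]
  · have hfib := card_filter_dotProduct_eq_mul hv (-δ 0)
    rw [Fintype.card_fin, pow_succ] at hfib
    calc #{c | δ 0 + Fin.tail δ ⬝ᵥ p c = 0}
        ≤ #{x : Fin (n + 1) → K | Fin.tail δ ⬝ᵥ x = -δ 0} := by
          refine card_le_card_of_injOn p (fun c hc => ?_) hp.injOn
          simp only [coe_filter, mem_univ, true_and, Set.mem_ofPred_eq] at hc ⊢
          linear_combination hc
      _ = Fintype.card K ^ n := Nat.eq_of_mul_eq_mul_right Fintype.card_pos hfib

def oneHot {κ R : Type*} [Zero R] [DecidableEq R] (y : κ → R) (iη : κ × {η : R // η ≠ 0}) :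
    ZMod 2 :=
  if y iη.1 = iη.2 then 1 else 0

theorem card_filter_ne_le_card_filter_oneHot_ne {κ R : Type*} [Fintype κ] [Fintype R] [Zero R]
    [DecidableEq R] (y y' : κ → R) : #{i | y i ≠ y' i} ≤ #{iη | oneHot y iη ≠ oneHot y' iη} := by
  refine card_le_card_of_surjOn Prod.fst fun i hi => ?_
  simp only [coe_filter, mem_univ, true_and, Set.mem_ofPred_eq] at hi
  simp only [coe_filter, mem_univ, true_and, Set.image, Set.mem_ofPred_eq]
  by_cases h : y i = 0
  · exact ⟨(i, ⟨y' i, fun h' => hi (h.trans h'.symm)⟩), by simp [oneHot, hi], rfl⟩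
  · exact ⟨(i, ⟨y i, h⟩), by simp [oneHot, Ne.symm hi], rfl⟩

theorem ZMod.val_eq_iff_eq_natCast {n : ℕ} [NeZero n] {z : ZMod n} {m : ℕ} (hm : m < n) :
    z.val = m ↔ z = m :=
  ⟨fun h => h ▸ (ZMod.natCast_zmod_val z).symm, fun h => h ▸ ZMod.val_cast_of_lt hm⟩

theorem IsIrMOA.reindex {ι' ι κ' κ : Type*} [Fintype ι'] [Fintype ι] [Fintype κ']
    [DecidableEq κ'] [Fintype κ] [DecidableEq κ] {A : ι → κ → ℕ} {lv : κ → ℕ} {k : ℕ}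
    (h : IsIrMOA A lv k) (e : ι' ≃ ι) (f : κ' ≃ κ) :
    IsIrMOA (fun i c => A (e i) (f c)) (lv ∘ f) k := by
  obtain ⟨⟨hlt, hcnt⟩, hd⟩ := h
  refine ⟨⟨fun i c => hlt (e i) (f c), fun S hS x hx => ?_⟩, fun i i' hii' => ?_⟩
  · have key := hcnt (S.map f.toEmbedding) (by simpa using hS) (x ∘ f.symm)
      (fun c hc => by
        have hc' := hx (f.symm c) (by simpa using hc)
        rwa [Function.comp_apply, Equiv.apply_symm_apply] at hc')
    rw [prod_map, Fintype.card_congr e.symm] at key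
    rw [← key]
    congr 1
    refine card_equiv e fun i => ?_
    simp only [mem_filter, mem_univ, true_and, mem_map_equiv, Function.comp_apply]
    exact ⟨fun h c hc => by simpa using h _ hc, fun h c hc => by simpa using h (f c) (by simpa)⟩
  · exact (hd _ _ (e.injective.ne hii')).trans (card_equiv f (by simp)).ge

section Glue

variable {ι₃ ι₂ κ₃ κ₂ : Type*} [Fintype ι₃] [DecidableEq ι₃] [Fintype ι₂] [DecidableEq ι₂]
  [Fintype κ₃] [DecidableEq κ₃] [Fintype κ₂] [DecidableEq κ₂]
  (τ : κ₃ → ι₃ → ZMod 3) (g : κ₂ → ι₂ → ZMod 2) (o : κ₂ → (ι₃ → ZMod 3) → ZMod 2)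

def glueArray (xw : (ι₃ → ZMod 3) × (ι₂ → ZMod 2)) : κ₃ ⊕ κ₂ → ℕ :=
  Sum.elim (fun j => (τ j ⬝ᵥ xw.1).val) (fun c => (g c ⬝ᵥ xw.2 + o c xw.1).val)

theorem isMOA_glueArray {k : ℕ} (hτ : ∀ T : Finset κ₃, #T ≤ k → LinearIndepOn (ZMod 3) τ T)
    (hg : ∀ T : Finset κ₂, #T ≤ k → LinearIndepOn (ZMod 2) g T) :
    IsMOA (glueArray τ g o) (Sum.elim (fun _ => 3) fun _ => 2) k := by
  refine ⟨fun xw c => ?_, fun S hS y hy => ?_⟩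
  · cases c <;> simp only [glueArray, Sum.elim_inl, Sum.elim_inr] <;> exact ZMod.val_lt _
  have hcard := S.card_toLeft_add_card_toRight
  have hcond : ∀ xw : (ι₃ → ZMod 3) × (ι₂ → ZMod 2), (∀ c ∈ S, glueArray τ g o xw c = y c) ↔
      (∀ j ∈ S.toLeft, τ j ⬝ᵥ xw.1 = (y (.inl j) : ZMod 3)) ∧
      ∀ c ∈ S.toRight, g c ⬝ᵥ xw.2 = (y (.inr c) : ZMod 2) - o c xw.1 := by
    intro xw
    simp only [Sum.forall, mem_toLeft, mem_toRight, glueArray, Sum.elim_inl, Sum.elim_inr,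
      eq_sub_iff_add_eq]
    refine and_congr (forall₂_congr fun j hj => ?_) (forall₂_congr fun c hc => ?_)
    · exact ZMod.val_eq_iff_eq_natCast (hy _ hj)
    · exact ZMod.val_eq_iff_eq_natCast (hy _ hc)
  rw [filter_congr fun xw _ => hcond xw, prod_sum_eq_prod_toLeft_mul_prod_toRight]
  simp only [Sum.elim_inl, Sum.elim_inr, prod_const]
  refine card_filter_prod_mul (P := fun x => ∀ j ∈ S.toLeft, τ j ⬝ᵥ x = (y (.inl j) : ZMod 3))
    (Q := fun x w => ∀ c ∈ S.toRight, g c ⬝ᵥ w = (y (.inr c) : ZMod 2) - o c x) ?_ fun x => ?_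
  · simpa [Fintype.card_fun] using card_filter_forall_dotProduct_eq_mul
      (hτ S.toLeft (by omega)) fun j => (y (.inl j) : ZMod 3)
  · simpa [Fintype.card_fun] using card_filter_forall_dotProduct_eq_mul
      (hg S.toRight (by omega)) fun c => (y (.inr c) : ZMod 2) - o c x

theorem isIrMOA_glueArray {k : ℕ} (hτ : ∀ T : Finset κ₃, #T ≤ k → LinearIndepOn (ZMod 3) τ T)
    (hg : ∀ T : Finset κ₂, #T ≤ k → LinearIndepOn (ZMod 2) g T)
    (hcode : ∀ δ ≠ 0, k + 1 ≤ #{c | o c = 0 ∧ g c ⬝ᵥ δ ≠ 0})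
    (hoff : ∀ x x', x ≠ x' → k + 1 ≤ #{j | τ j ⬝ᵥ x ≠ τ j ⬝ᵥ x'} + #{c | o c x ≠ o c x'}) :
    IsIrMOA (glueArray τ g o) (Sum.elim (fun _ => 3) fun _ => 2) k := by
  refine ⟨isMOA_glueArray τ g o hτ hg, ?_⟩
  rintro ⟨x, w⟩ ⟨x', w'⟩ hne
  rw [hamDist, card_filter_sum]
  simp only [glueArray, Sum.elim_inl, Sum.elim_inr, (ZMod.val_injective _).ne_iff]
  by_cases hw : w = w'
  · subst hw
    simpa using hoff x x' (by rintro rfl; exact hne rfl)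
  · refine (hcode (w - w') (sub_ne_zero.mpr hw)).trans (le_add_left (card_le_card ?_))
    intro c hc
    simp only [mem_filter, mem_univ, true_and, dotProduct_sub, sub_ne_zero] at hc ⊢
    simpa [hc.1] using hc.2

end Glue

section Construction

variable {M d s a e n : ℕ} (u : Fin M ⊕ Fin d → Fin (s + 1) → ZMod 3)

abbrev OneHotIndex (d : ℕ) := Fin d × {η : ZMod 3 // η ≠ 0}

def ternaryForm (j : Fin M) : Fin (s + 2) → ZMod 3 := Fin.cons 1 (u (.inl j))

def droppedCoord (i : Fin d) (x : Fin (s + 2) → ZMod 3) : ZMod 3 :=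
  (Fin.cons 1 (u (.inr i)) : Fin (s + 2) → ZMod 3) ⬝ᵥ x

def binaryForm (p : Fin a → Fin (n + 1) → ZMod 2)
    (q : OneHotIndex d ⊕ Fin e → Fin (n + 1) → ZMod 2) :
    Fin a ⊕ (OneHotIndex d ⊕ Fin e) → Fin (n + 2) → ZMod 2 :=
  Sum.elim (fun i => Fin.cons 1 (p i)) fun r => Fin.cons 0 (q r)

def oneHotOffset : Fin a ⊕ (OneHotIndex d ⊕ Fin e) → (Fin (s + 2) → ZMod 3) → ZMod 2 :=
  Sum.elim 0 (Sum.elim (fun iη x => oneHot (droppedCoord u · x) iη) 0)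

theorem three_le_card_filter_offset_eq_zero_and_binaryForm_ne_zero
    {p : Fin a → Fin (n + 1) → ZMod 2} (hp : Function.Injective p) (hna : 2 ^ n + 3 ≤ a)
    (q : OneHotIndex d ⊕ Fin e → Fin (n + 1) → ZMod 2) {δ : Fin (n + 2) → ZMod 2}
    (hδ : δ ≠ 0) : 3 ≤ #{c | oneHotOffset u c = 0 ∧ binaryForm p q c ⬝ᵥ δ ≠ 0} := by
  have h := card_le_card_filter_cons_one_dotProduct_ne_zero_add hp hδ
  simp only [ZMod.card, Fintype.card_fin, ne_eq] at h
  rw [card_filter_sum]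
  simp only [oneHotOffset, binaryForm, Sum.elim_inl, Sum.elim_inr, Pi.zero_apply, ne_eq, true_and]
  omega

theorem three_le_card_filter_ternaryForm_ne_add_card_filter_offset_ne
    (hu : Function.Injective u) (hsd : 3 ^ s + 3 ≤ M + d) {x x' : Fin (s + 2) → ZMod 3}
    (hxx' : x ≠ x') :
    3 ≤ #{j | ternaryForm u j ⬝ᵥ x ≠ ternaryForm u j ⬝ᵥ x'} +
      #{c : Fin a ⊕ (OneHotIndex d ⊕ Fin e) | oneHotOffset u c x ≠ oneHotOffset u c x'} := by
  have hdist := card_le_card_filter_cons_one_dotProduct_ne_zero_add hu (sub_ne_zero.mpr hxx')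
  simp only [ZMod.card, Fintype.card_sum, Fintype.card_fin] at hdist
  have hsplit : #{c | (Fin.cons 1 (u c) : Fin (s + 2) → ZMod 3) ⬝ᵥ (x - x') ≠ 0}
      = #{j | ternaryForm u j ⬝ᵥ x ≠ ternaryForm u j ⬝ᵥ x'} +
        #{i | droppedCoord u i x ≠ droppedCoord u i x'} := by
    rw [card_filter_sum]
    simp only [dotProduct_sub, sub_ne_zero, ternaryForm, droppedCoord]
    congr
  have hembed : #{iη | oneHot (droppedCoord u · x) iη ≠ oneHot (droppedCoord u · x') iη}
      ≤ #{c : Fin a ⊕ (OneHotIndex d ⊕ Fin e) | oneHotOffset u c x ≠ oneHotOffset u c x'} :=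
    card_le_card_of_injOn (fun iη => .inr (.inl iη))
      (fun iη h => by
        rw [mem_coe, mem_filter] at h ⊢
        exact ⟨mem_univ _, h.2⟩)
      (fun _ _ _ _ h => by simpa using h)
  calc 3 ≤ #{c | (Fin.cons 1 (u c) : Fin (s + 2) → ZMod 3) ⬝ᵥ (x - x') ≠ 0} := by omega
    _ = _ := hsplit
    _ ≤ _ := by
      gcongr
      exact (card_filter_ne_le_card_filter_oneHot_ne _ _).trans hembed

theorem isIrMOA_glueArray_ternaryForm_binaryForm (hu : Function.Injective u)
    (hsd : 3 ^ s + 3 ≤ M + d) {p : Fin a → Fin (n + 1) → ZMod 2} (hp : Function.Injective p)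
    (hna : 2 ^ n + 3 ≤ a) {q : OneHotIndex d ⊕ Fin e → Fin (n + 1) → ZMod 2}
    (hq : Function.Injective q) (hq0 : ∀ r, q r ≠ 0) :
    IsIrMOA (glueArray (ternaryForm u) (binaryForm p q) (oneHotOffset u))
      (Sum.elim (fun _ => 3) fun _ => 2) 2 :=
  isIrMOA_glueArray _ _ _
    (fun _ hT => linearIndepOn_cons_one (hu.comp Sum.inl_injective) hT)
    (fun _ hT => linearIndepOn_sumElim_cons_one_cons_zero hp hq hq0 hT)
    (fun _ hδ => three_le_card_filter_offset_eq_zero_and_binaryForm_ne_zero u hp hna q hδ)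
    (fun _ _ hxx' => three_le_card_filter_ternaryForm_ne_add_card_filter_offset_ne u hu hsd hxx')

end Construction

theorem exists_affine_ternary_points {M : ℕ} (hM : 1 ≤ M) :
    ∃ s d : ℕ, d ≤ 5 ∧ 3 ^ s + 3 ≤ M + d ∧
      ∃ u : Fin M ⊕ Fin d → Fin (s + 1) → ZMod 3, Function.Injective u := by
  obtain ⟨s, hlo, hhi⟩ : ∃ s, 3 ^ s ≤ M + 2 ∧ M + 2 < 3 ^ s * 3 :=
    ⟨_, Nat.pow_log_le_self 3 (by omega), pow_succ 3 _ ▸ Nat.lt_pow_succ_log_self (by norm_num) _⟩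
  obtain ⟨u⟩ := Function.Embedding.nonempty_of_card_le
    (α := Fin M ⊕ Fin (3 ^ s + 3 - M)) (β := Fin (s + 1) → ZMod 3)
    (by simp only [Fintype.card_sum, Fintype.card_fin, Fintype.card_fun, ZMod.card, pow_succ]
        omega)
  exact ⟨s, 3 ^ s + 3 - M, by omega, by omega, u, u.injective⟩

theorem exists_binary_points {N : ℕ} (hN : 21 ≤ N) (β : Type*) [Fintype β]
    (hβ : Fintype.card β ≤ 10) :
    ∃ n a e : ℕ, a + (Fintype.card β + e) = N ∧ 2 ^ n + 3 ≤ a ∧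
      (∃ p : Fin a → Fin (n + 1) → ZMod 2, Function.Injective p) ∧
      ∃ q : β ⊕ Fin e → Fin (n + 1) → ZMod 2, Function.Injective q ∧ ∀ r, q r ≠ 0 := by
  obtain ⟨n, hlo, hhi⟩ : ∃ n, 2 ^ n ≤ N - 13 ∧ N - 13 < 2 ^ n * 2 :=
    ⟨_, Nat.pow_log_le_self 2 (by omega), pow_succ 2 _ ▸ Nat.lt_pow_succ_log_self (by norm_num) _⟩
  have h8 : 2 ^ 3 ≤ 2 ^ n := Nat.pow_le_pow_right (by norm_num)
    ((Nat.pow_lt_pow_iff_right (by norm_num)).mp (by omega : 2 ^ 2 < 2 ^ n))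
  set a := min (N - 10) (2 ^ n * 2)
  refine ⟨n, a, N - a - Fintype.card β, by omega, by omega, ?_, ?_⟩
  · obtain ⟨p⟩ := Function.Embedding.nonempty_of_card_le (α := Fin a)
      (β := Fin (n + 1) → ZMod 2) (by simp [ZMod.card, pow_succ, a])
    exact ⟨p, p.injective⟩
  · obtain ⟨q⟩ := Function.Embedding.nonempty_of_card_le
      (α := β ⊕ Fin (N - a - Fintype.card β)) (β := {v : Fin (n + 1) → ZMod 2 // v ≠ 0})
      (by simp only [Fintype.card_sum, Fintype.card_fin, ne_eq, Fintype.card_subtype_compl,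
            Fintype.card_pi, ZMod.card, prod_const, card_univ, pow_succ, Fintype.card_unique]
          omega)
    exact ⟨fun r => q r, Subtype.val_injective.comp q.injective, fun r => (q r).2⟩

theorem exists_isIrMOA_three_two {M N : ℕ} (hM : 1 ≤ M) (hN : 21 ≤ N) :
    ∃ (r : ℕ) (C : Fin r → (Fin M ⊕ Fin N) → ℕ),
      0 < r ∧ IsIrMOA C (Sum.elim (fun _ => 3) fun _ => 2) 2 := by
  obtain ⟨s, d, hd, hsd, u, hu⟩ := exists_affine_ternary_points hM
  have hE : Fintype.card (OneHotIndex d) = 2 * d := by simp [mul_comm]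
  obtain ⟨n, a, e, haN, hna, ⟨p, hp⟩, q, hq, hq0⟩ :=
    exists_binary_points hN (OneHotIndex d) (by omega)
  have hA := isIrMOA_glueArray_ternaryForm_binaryForm u hu hsd hp hna hq hq0
  have hcols : Fin N ≃ Fin a ⊕ (OneHotIndex d ⊕ Fin e) :=
    (Fintype.equivFinOfCardEq (by simp [hE, ← haN])).symm
  have hB := hA.reindex (Fintype.equivFin _).symm (Equiv.sumCongr (Equiv.refl _) hcols)
  refine ⟨_, fun i c => glueArray (ternaryForm u) (binaryForm p q) (oneHotOffset u)
    ((Fintype.equivFin _).symm i) (Equiv.sumCongr (Equiv.refl _) hcols c), Fintype.card_pos, ?_⟩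
  convert hB using 1
  ext (j | c) <;> rfl

theorem statement5_general (m M N : ℕ) (hm : 2 ≤ m) (hM1 : 1 ≤ M)
    (hN : 9 * 2 ^ (m - 1) + 3 ≤ N) :
    ∃ (r : ℕ) (C : Fin r → (Fin M ⊕ Fin N) → ℕ),
      0 < r ∧ IsIrMOA C (Sum.elim (fun _ => 3) fun _ => 2) 2 := by
  have h2 : 2 ^ 1 ≤ 2 ^ (m - 1) := Nat.pow_le_pow_right (by norm_num) (by omega)
  exact exists_isIrMOA_three_two hM1 (by omega)

/-- For every `m ≥ 2`, every `M` with `1 ≤ M ≤ 3·2^m`, and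
every `N ≥ 9·2^{m−1} + 3`, there exist `r > 0` and an irredundant mixed
orthogonal array `IrMOA(r, M+N, 3^M2^N, 2)`. -/
theorem statement5 (m M N : ℕ) (hm : 2 ≤ m) (hM1 : 1 ≤ M)
    (hMa : M ≤ 3 * 2 ^ m) (hN : 9 * 2 ^ (m - 1) + 3 ≤ N) :
    ∃ (r : ℕ) (C : Fin r → (Fin M ⊕ Fin N) → ℕ),
      0 < r ∧ IsIrMOA C (Sum.elim (fun _ => 3) fun _ => 2) 2 :=
  statement5_general m M N hm hM1 hN
end

section
/- Let A be an orthogonal array OA(r, N, d, k) with MD(A) = k+1, and for each w = 1,…,t let B_w be a mixed orthogonal array of strength k with d rows and m_w columns of alphabet sizes d_{1w},…,d_{m_w w}, satisfying MD(B_w) ≥ 1. Then for all nonnegative integers n₁,…,n_t with 1 ≤ n₁+⋯+n_t ≤ N there exists an irredundant mixed orthogonal array IrMOA(r, N + Σ_{j=1}^{t}(m_j − 1)n_j, d^{N−(n₁+⋯+n_t)}d_{11}^{n₁}⋯d_{m₁1}^{n₁}⋯d_{1t}^{n_t}⋯d_{m_t t}^{n_t}, k). -/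
/-!
Replace each of the `n_w` chosen columns of `A` by the `m_w` columns of `B_w`, a symbol `a` in
such a column becoming row `a` of `B_w`. A set of at most `k` new columns lies over at most `k`
columns of `A`; the rows of the new array matching a prescribed tuple there are exactly the rows
of `A` whose entries in these parent columns lie in certain symbol sets `G_j`. The strength of
`B_w` gives `|G_j| · (product of the new levels above j) = d`, and the strength of `A`, applied
fiberwise over the product of the `G_j`, then yields the required count. Since the rows of each
`B_w` are distinct, two rows differing in a column of `A` still differ after the replacement, so
Hamming distances do not decrease and the new array inherits `MD ≥ k + 1`.
-/

open Finset

section Distance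

variable {ι κ : Type*} [Fintype κ]

theorem minDist_le_hamDist (A : ι → κ → ℕ) {i i' : ι} (h : i ≠ i') :
    minDist A ≤ hamDist A i i' :=
  Nat.sInf_le ⟨i, i', h, rfl⟩

theorem hamDist_eq_zero_iff (A : ι → κ → ℕ) (i i' : ι) : hamDist A i i' = 0 ↔ A i = A i' := by
  simp [hamDist, funext_iff]

theorem injective_of_one_le_minDist {A : ι → κ → ℕ} (h : 1 ≤ minDist A) :
    Function.Injective A := fun i i' hA => by_contra fun hne =>
  Nat.one_le_iff_ne_zero.1 (h.trans (minDist_le_hamDist A hne)) ((hamDist_eq_zero_iff A i i').2 hA)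

theorem hamDist_comp_equiv {κ' : Type*} [Fintype κ'] (A : ι → κ → ℕ) (e : κ' ≃ κ) (i i' : ι) :
    hamDist (fun i c => A i (e c)) i i' = hamDist A i i' :=
  card_equiv e (by simp)

end Distance

section Reindex

variable {ι κ κ' : Type*} [Fintype ι] [Fintype κ] [Fintype κ'] [DecidableEq κ] [DecidableEq κ']
  {A : ι → κ → ℕ} {lv : κ → ℕ} {k : ℕ}

theorem IsMOA.comp_equiv (h : IsMOA A lv k) (e : κ' ≃ κ) :
    IsMOA (fun i c => A i (e c)) (fun c => lv (e c)) k := by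
  refine ⟨fun i c => h.1 i (e c), fun S hS x hx => ?_⟩
  have := h.2 (S.map e.toEmbedding) (by simpa using hS) (fun j => x (e.symm j))
    (fun j hj => by simpa using hx (e.symm j) (by simpa using hj))
  simpa [prod_map, ← e.forall_congr_right (q := fun j => e.symm j ∈ S → _)] using this

theorem IsIrMOA.comp_equiv (h : IsIrMOA A lv k) (e : κ' ≃ κ) :
    IsIrMOA (fun i c => A i (e c)) (fun c => lv (e c)) k :=
  ⟨h.1.comp_equiv e, fun i i' hne => (hamDist_comp_equiv A e i i').symm ▸ h.2 i i' hne⟩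

end Reindex

theorem IsMOA.card_filter_mem_mul_prod {ι κ : Type*} [Fintype ι] [Fintype κ] [DecidableEq κ]
    {A : ι → κ → ℕ} {lv : κ → ℕ} {k : ℕ} (h : IsMOA A lv k) {S : Finset κ} (hS : #S ≤ k)
    (F : κ → Finset ℕ) (hF : ∀ j ∈ S, F j ⊆ range (lv j)) :
    #{i | ∀ j ∈ S, A i j ∈ F j} * ∏ j ∈ S, lv j = Fintype.card ι * ∏ j ∈ S, #(F j) := by
  rw [card_eq_sum_card_fiberwise (f := fun i j _ => A i j) (t := S.pi F)
    (fun i hi => mem_pi.2 (by simpa using hi)), sum_mul]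
  have fiber : ∀ p ∈ S.pi F,
      #{i ∈ {i | ∀ j ∈ S, A i j ∈ F j} | (fun j _ => A i j) = p} * ∏ j ∈ S, lv j
        = Fintype.card ι := by
    intro p hp
    rw [mem_pi] at hp
    convert h.2 S hS (fun j => if hj : j ∈ S then p j hj else 0)
      (fun j hj => by simpa [hj] using hF j hj (hp j hj)) using 3
    ext i
    simp only [mem_filter, mem_univ, true_and, funext_iff]
    constructor
    · rintro ⟨-, hi⟩ j hj
      simp [hj, hi j hj]
    · intro hi
      refine ⟨fun j hj => ?_, fun j hj => ?_⟩ <;> simp only [hi j hj, hj, dite_true]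
      exact hp j hj
  rw [sum_congr rfl fiber, sum_const, card_pi, smul_eq_mul, mul_comm]

section Expansion

variable {ι κ : Type*} {τ : κ → Type*} [Fintype κ] [∀ j, Fintype (τ j)]
  {A : ι → κ → ℕ} {lv : κ → ℕ} {B : (j : κ) → ℕ → τ j → ℕ}

theorem hamDist_le_hamDist_expand (hA : ∀ i j, A i j < lv j)
    (hB : ∀ j, Function.Injective (fun a : Fin (lv j) => B j a)) (i i' : ι) :
    hamDist A i i' ≤ hamDist (fun i (c : Σ j, τ j) => B c.1 (A i c.1) c.2) i i' := by
  refine card_le_card_of_surjOn Sigma.fst fun j hj => ?_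
  have hne : B j (A i j) ≠ B j (A i' j) := fun h =>
    (mem_filter.1 hj).2 (congrArg Fin.val (hB j (a₁ := ⟨_, hA i j⟩) (a₂ := ⟨_, hA i' j⟩) h))
  obtain ⟨q, hq⟩ := Function.ne_iff.1 hne
  exact ⟨⟨j, q⟩, by simpa using hq, rfl⟩

variable [Fintype ι] [DecidableEq κ] [∀ j, DecidableEq (τ j)] {k : ℕ} {blv : (j : κ) → τ j → ℕ}

theorem IsMOA.expand (hA : IsMOA A lv k) (hB : ∀ j, IsMOA (fun a : Fin (lv j) => B j a) (blv j) k) :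
    IsMOA (fun i (c : Σ j, τ j) => B c.1 (A i c.1) c.2) (fun c => blv c.1 c.2) k := by
  refine ⟨fun i c => (hB c.1).1 ⟨A i c.1, hA.1 i c.1⟩ c.2, fun S hS x hx => ?_⟩
  set P := S.image Sigma.fst
  set T : (j : κ) → Finset (τ j) := fun j => S.preimage (Sigma.mk j) sigma_mk_injective.injOn
  have hPT : P.sigma T = S := sigma_image_fst_preimage_mk S
  set G : κ → Finset ℕ := fun j =>
    (univ.filter fun a : Fin (lv j) => ∀ q ∈ T j, B j a q = x ⟨j, q⟩).map Fin.valEmbedding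
  have hG : ∀ j, #(G j) * ∏ q ∈ T j, blv j q = lv j := by
    intro j
    have hTk : #(T j) ≤ k :=
      (card_le_card_of_injOn (Sigma.mk j) (fun q hq => mem_preimage.1 hq)
        sigma_mk_injective.injOn).trans hS
    simpa [G] using (hB j).2 (T j) hTk (fun q => x ⟨j, q⟩) (fun q hq => hx _ (mem_preimage.1 hq))
  have hrows : #{i | ∀ c ∈ S, B c.1 (A i c.1) c.2 = x c} = #{i | ∀ j ∈ P, A i j ∈ G j} := by
    congr 1
    ext i
    have hmem : ∀ j, A i j ∈ G j ↔ ∀ q ∈ T j, B j (A i j) q = x ⟨j, q⟩ := fun j => by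
      simp [G, Fin.exists_iff, hA.1 i j]
    simp only [mem_filter, mem_univ, true_and, ← hPT, mem_sigma, Sigma.forall, hmem]
    exact ⟨fun h j hj q hq => h j q ⟨hj, hq⟩, fun h j q hjq => h j hjq.1 q hjq.2⟩
  have hcount := hA.card_filter_mem_mul_prod (S := P) (card_image_le.trans hS) G fun j _ a ha => by
    simp only [G, mem_map, Fin.valEmbedding_apply] at ha
    obtain ⟨a, -, rfl⟩ := ha
    exact mem_range.2 a.isLt
  rcases isEmpty_or_nonempty ι with hι | ⟨⟨i₀⟩⟩
  · simp
  have hGpos : ∏ j ∈ P, #(G j) ≠ 0 := prod_ne_zero_iff.2 fun j _ hj => by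
    have := hG j
    rw [hj, zero_mul] at this
    exact absurd (hA.1 i₀ j) (by omega)
  apply Nat.eq_of_mul_eq_mul_right (Nat.pos_of_ne_zero hGpos)
  calc (#{i | ∀ c ∈ S, B c.1 (A i c.1) c.2 = x c} * ∏ c ∈ S, blv c.1 c.2) * ∏ j ∈ P, #(G j)
      = #{i | ∀ j ∈ P, A i j ∈ G j} * ∏ j ∈ P, (#(G j) * ∏ q ∈ T j, blv j q) := by
        rw [hrows, ← hPT, prod_sigma, prod_mul_distrib]; ring
    _ = Fintype.card ι * ∏ j ∈ P, #(G j) := by simp only [hG, hcount]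

theorem IsIrMOA.expand (hA : IsIrMOA A lv k)
    (hB : ∀ j, IsMOA (fun a : Fin (lv j) => B j a) (blv j) k)
    (hBinj : ∀ j, Function.Injective (fun a : Fin (lv j) => B j a)) :
    IsIrMOA (fun i (c : Σ j, τ j) => B c.1 (A i c.1) c.2) (fun c => blv c.1 c.2) k :=
  ⟨hA.1.expand hB, fun i i' hne =>
    (hA.2 i i' hne).trans (hamDist_le_hamDist_expand hA.1.1 hBinj i i')⟩

end Expansion

theorem isMOA_val_fin_one (d k : ℕ) :
    IsMOA (fun (a : Fin d) (_ : Fin 1) => a.val) (fun _ => d) k := by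
  refine ⟨fun a _ => a.isLt, fun S _ x hx => ?_⟩
  rcases subset_singleton_iff.1 (subset_univ S) with rfl | rfl
  · simp
  · have hx0 : x 0 < d := hx 0 (mem_singleton_self _)
    simp only [mem_singleton, forall_eq, prod_singleton, Fintype.card_fin]
    rw [card_eq_one.2 ⟨⟨x 0, hx0⟩, by ext; simp [Fin.ext_iff]⟩, one_mul]

def replaceColumnsEquiv {α ω : Type*} {β : ω → Type*} (m : ω → ℕ) :
    (α ⊕ Σ w, β w × Fin (m w)) ≃
      Σ c : α ⊕ Σ w, β w, Fin (Sum.elim (fun _ => 1) (fun σ => m σ.1) c) where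
  toFun := Sum.elim (fun a => ⟨.inl a, (0 : Fin 1)⟩) (fun z => ⟨.inr ⟨z.1, z.2.1⟩, z.2.2⟩)
  invFun
    | ⟨.inl a, _⟩ => .inl a
    | ⟨.inr σ, q⟩ => .inr ⟨σ.1, σ.2, q⟩
  left_inv := by rintro (a | ⟨w, p, q⟩) <;> rfl
  right_inv := by
    rintro ⟨a | ⟨w, p⟩, q⟩
    · rw [Fin.fin_one_eq_zero q]; rfl
    · rfl

theorem IsIrMOA.replaceColumns {ι α ω : Type*} {β : ω → Type*} [Fintype ι] [Fintype α]
    [DecidableEq α] [Fintype ω] [DecidableEq ω] [∀ w, Fintype (β w)] [∀ w, DecidableEq (β w)]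
    {A : ι → (α ⊕ Σ w, β w) → ℕ} {d k : ℕ} (hA : IsIrMOA A (fun _ => d) k)
    {m : ω → ℕ} {B : (w : ω) → ℕ → Fin (m w) → ℕ} {Blv : (w : ω) → Fin (m w) → ℕ}
    (hB : ∀ w, IsMOA (fun a : Fin d => B w a.val) (Blv w) k)
    (hBinj : ∀ w, Function.Injective (fun a : Fin d => B w a.val)) :
    IsIrMOA (fun i => Sum.elim (fun a => A i (.inl a))
        (fun z : Σ w, β w × Fin (m w) => B z.1 (A i (.inr ⟨z.1, z.2.1⟩)) z.2.2))
      (Sum.elim (fun _ => d) fun z => Blv z.1 z.2.2) k := by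
  -- A kept column is expanded by the `d × 1` array listing all symbols, so the whole
  -- construction is a single expansion.
  let M : α ⊕ (Σ w, β w) → ℕ := Sum.elim (fun _ => 1) (fun σ => m σ.1)
  let B' : (c : α ⊕ Σ w, β w) → ℕ → Fin (M c) → ℕ :=
    Sum.rec (fun _ a _ => a) (fun σ => B σ.1)
  let Blv' : (c : α ⊕ Σ w, β w) → Fin (M c) → ℕ := Sum.rec (fun _ _ => d) (fun σ => Blv σ.1)
  have hB' : ∀ c, IsMOA (fun a : Fin d => B' c a) (Blv' c) k := by
    rintro (a | σ)
    · exact isMOA_val_fin_one d k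
    · exact hB σ.1
  have hBinj' : ∀ c, Function.Injective (fun a : Fin d => B' c a) := by
    rintro (a | σ)
    · exact fun a₁ a₂ h => Fin.ext (congrFun h (0 : Fin 1))
    · exact hBinj σ.1
  convert (hA.expand hB' hBinj').comp_equiv (replaceColumnsEquiv m) using 1
  · funext i c
    rcases c with a | ⟨w, p, q⟩ <;> rfl
  · funext c
    rcases c with a | ⟨w, p, q⟩ <;> rfl

theorem statement12_general {r N d k t : ℕ}
    (A : Fin r → Fin N → ℕ) (hA : IsMOA A (fun _ => d) k)
    (hMDA : minDist A = k + 1)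
    (m : Fin t → ℕ)
    (B : (w : Fin t) → ℕ → Fin (m w) → ℕ)
    (Blv : (w : Fin t) → Fin (m w) → ℕ)
    (hB : ∀ w, IsMOA (fun a : Fin d => B w a.val) (Blv w) k)
    (hBMD : ∀ w, 1 ≤ minDist (fun a : Fin d => B w a.val))
    (n : Fin t → ℕ) (hnN : ∑ w, n w ≤ N) :
    ∃ C : Fin r → (Fin (N - ∑ w, n w) ⊕ (Σ w : Fin t, Fin (n w) × Fin (m w))) → ℕ,
      IsIrMOA C (Sum.elim (fun _ => d) fun p => Blv p.1 p.2.2) k := by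
  have hAIr : IsIrMOA A (fun _ => d) k :=
    ⟨hA, fun i i' hne => hMDA ▸ minDist_le_hamDist A hne⟩
  have e : (Fin (N - ∑ w, n w) ⊕ Σ w, Fin (n w)) ≃ Fin N :=
    Fintype.equivOfCardEq <| by
      simp only [Fintype.card_sum, Fintype.card_fin, Fintype.card_sigma]
      omega
  exact ⟨_, (hAIr.comp_equiv e).replaceColumns hB fun w => injective_of_one_le_minDist (hBMD w)⟩

/-- Let `A = OA(r, N, d, k)` with `MD(A) = k+1`, and for
`w = 1,…,t` let `B w` be an MOA of strength `k` with `d` rows, `m w` columns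
and levels `Blv w`, with `MD(B w) ≥ 1`. Then for all `n₁,…,n_t ≥ 0` with
`1 ≤ n₁+⋯+n_t ≤ N` there is an irredundant MOA of strength `k` with `r` rows,
`N − (n₁+⋯+n_t)` columns of `d` levels and, for each `w` and each column `i`
of `B w`, exactly `n w` columns of `Blv w i` levels. -/
theorem statement12 {r N d k t : ℕ}
    (A : Fin r → Fin N → ℕ) (hA : IsMOA A (fun _ => d) k)
    (hMDA : minDist A = k + 1)
    (m : Fin t → ℕ)
    (B : (w : Fin t) → ℕ → Fin (m w) → ℕ)
    (Blv : (w : Fin t) → Fin (m w) → ℕ)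
    (hB : ∀ w, IsMOA (fun a : Fin d => B w a.val) (Blv w) k)
    (hBMD : ∀ w, 1 ≤ minDist (fun a : Fin d => B w a.val))
    (n : Fin t → ℕ) (hn1 : 1 ≤ ∑ w, n w) (hnN : ∑ w, n w ≤ N) :
    ∃ C : Fin r → (Fin (N - ∑ w, n w) ⊕ (Σ w : Fin t, Fin (n w) × Fin (m w))) → ℕ,
      IsIrMOA C (Sum.elim (fun _ => d) fun p => Blv p.1 p.2.2) k :=
  statement12_general A hA hMDA m B Blv hB hBMD n hnN
end
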